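/- arXiv:2209.00963 — 4 statements merged into one kernel-verified Lean document; each statement's English description precedes it below -/
import Mathlib

section
/- For every 1 ≤ i ≤ mn one has β_i ∈ Π^{(i−1)} (so that the odd reflection r̂_{β_i} can indeed be applied to Π^{(i−1)}), and −β_i ∈ Π^{(i)}. Consequently there is a well-defined chain of mn simple root systems Π^{(1)}, …, Π^{(mn)} in which each Π^{(i)} arises from Π^{(i−1)} by the odd reflection at β_i. -/
/-! Write `i = kn + l` with `0 ≤ l < n` and put `q = m - k` (so `β_{i+1} = δ_q - ε_{l+1}`).
There is no need to compute `Π^{(i)}` completely: it suffices that it contains `β_{i+1}`, the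
differences `ε_t - ε_{t+1}` for `t ≠ l`, `δ_s - δ_{s+1}` for `s + 1 < q`, and the roots linking
`β_{i+1}` to its neighbours: `δ_{q-1} - δ_q` if `l = 0`, `δ_{q-1} - ε_1` and `ε_l - δ_q` if `l > 0`.
Under the odd reflection at `β_{i+1}` each of these roots is either orthogonal to `β_{i+1}` and
survives, or is paired nontrivially with it and is shifted by `β_{i+1}` into the corresponding
root for the position `i + 1`; for instance `(ε_{l+1} - ε_{l+2}) + β_{i+1} = β_{i+2}`. -/


open scoped BigOperators

noncomputable section

/-- The weight space of `GL(m|n)` with rational coefficients. -/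
abbrev Vmn (m n : ℕ) := (Fin m ⊕ Fin n) → ℚ

/-- `dd m n s` is the basis vector `δ_{s+1}` (0-indexed `s`). -/
def dd (m n : ℕ) (s : ℕ) : Vmn m n := fun x =>
  match x with
  | Sum.inl a => if (a : ℕ) = s then 1 else 0
  | Sum.inr _ => 0

/-- `ee m n t` is the basis vector `ε_{t+1}` (0-indexed `t`). -/
def ee (m n : ℕ) (t : ℕ) : Vmn m n := fun x =>
  match x with
  | Sum.inl _ => 0
  | Sum.inr b => if (b : ℕ) = t then 1 else 0

/-- The symmetric bilinear form with `(δ_i,δ_j) = δ_{ij}`, `(ε_i,ε_j) = -δ_{ij}`,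
`(δ_i,ε_j) = 0`. -/
def Bform (m n : ℕ) (f g : Vmn m n) : ℚ :=
  (∑ a : Fin m, f (Sum.inl a) * g (Sum.inl a))
    - ∑ b : Fin n, f (Sum.inr b) * g (Sum.inr b)

/-- The `i`-th positive odd root (for `1 ≤ i ≤ mn`): `β_{kn+l} = δ_{m-k} - ε_l`. -/
def betaRoot (m n : ℕ) (i : ℕ) : Vmn m n :=
  dd m n (m - 1 - (i - 1) / n) - ee m n ((i - 1) % n)

/-- The standard simple system
`Π = {δ_1-δ_2, …, δ_{m-1}-δ_m, δ_m-ε_1, ε_1-ε_2, …, ε_{n-1}-ε_n}`. -/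
def stdSimple (m n : ℕ) : Set (Vmn m n) :=
  {v | ∃ s, s + 1 < m ∧ v = dd m n s - dd m n (s + 1)} ∪
    {dd m n (m - 1) - ee m n 0} ∪
    {v | ∃ t, t + 1 < n ∧ v = ee m n t - ee m n (t + 1)}

/-- The odd reflection `r̂_β` applied to a set `S`. -/
def oddRefl (m n : ℕ) (β : Vmn m n) (S : Set (Vmn m n)) : Set (Vmn m n) :=
  {α | α ∈ S ∧ α ≠ β ∧ Bform m n α β = 0} ∪
    {γ | ∃ α ∈ S, Bform m n α β ≠ 0 ∧ γ = α + β} ∪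
    {-β}

/-- `simpleSys m n i = Π^{(i)}`, obtained from `Π` by the odd reflections
`r̂_{β_1}, …, r̂_{β_i}`. -/
def simpleSys (m n : ℕ) : ℕ → Set (Vmn m n)
  | 0 => stdSimple m n
  | i + 1 => oddRefl m n (betaRoot m n (i + 1)) (simpleSys m n i)

@[simp] lemma dd_inl (m n s : ℕ) (a : Fin m) :
    dd m n s (Sum.inl a) = if (a : ℕ) = s then 1 else 0 := rfl

@[simp] lemma dd_inr (m n s : ℕ) (b : Fin n) : dd m n s (Sum.inr b) = 0 := rfl

@[simp] lemma ee_inl (m n t : ℕ) (a : Fin m) : ee m n t (Sum.inl a) = 0 := rfl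

@[simp] lemma ee_inr (m n t : ℕ) (b : Fin n) :
    ee m n t (Sum.inr b) = if (b : ℕ) = t then 1 else 0 := rfl

lemma betaRoot_succ (m n i : ℕ) :
    betaRoot m n (i + 1) = dd m n (m - 1 - i / n) - ee m n (i % n) := by
  simp [betaRoot]

lemma simpleSys_succ (m n i : ℕ) :
    simpleSys m n (i + 1) = oddRefl m n (betaRoot m n (i + 1)) (simpleSys m n i) :=
  rfl

section Bform

variable {m n : ℕ}

lemma Bform_sub_left (f g h : Vmn m n) :
    Bform m n (f - g) h = Bform m n f h - Bform m n g h := by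
  simp only [Bform, Pi.sub_apply, sub_mul, Finset.sum_sub_distrib]
  ring

lemma Bform_dd_left {s : ℕ} (hs : s < m) (g : Vmn m n) :
    Bform m n (dd m n s) g = g (Sum.inl ⟨s, hs⟩) := by
  have h : ∀ a : Fin m, (a : ℕ) = s ↔ a = ⟨s, hs⟩ := fun a => by simp [Fin.ext_iff]
  simp [Bform, ite_mul, h]

lemma Bform_ee_left {t : ℕ} (ht : t < n) (g : Vmn m n) :
    Bform m n (ee m n t) g = -g (Sum.inr ⟨t, ht⟩) := by
  have h : ∀ b : Fin n, (b : ℕ) = t ↔ b = ⟨t, ht⟩ := fun b => by simp [Fin.ext_iff]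
  simp [Bform, ite_mul, h]

end Bform

section OddReflection

variable {m n : ℕ} {β α : Vmn m n} {S : Set (Vmn m n)}

lemma mem_oddRefl_of_orthogonal (hα : α ∈ S) (hne : α ≠ β) (h : Bform m n α β = 0) :
    α ∈ oddRefl m n β S :=
  Or.inl (Or.inl ⟨hα, hne, h⟩)

lemma add_mem_oddRefl (hα : α ∈ S) (h : Bform m n α β ≠ 0) : α + β ∈ oddRefl m n β S :=
  Or.inl (Or.inr ⟨α, hα, h, rfl⟩)

lemma neg_mem_oddRefl : -β ∈ oddRefl m n β S :=
  Or.inr rfl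

end OddReflection

/-- Indices are 0-based: `S` plays the role of `Π^{(i)}` for `i = (m - 1 - q) n + l`, whose next
odd root is `dd q - ee l = δ_{q+1} - ε_{l+1}`. -/
structure ContainsChainRoots (m n q l : ℕ) (S : Set (Vmn m n)) : Prop where
  head : dd m n q - ee m n l ∈ S
  eps : ∀ t, t + 1 < n → t + 1 ≠ l → ee m n t - ee m n (t + 1) ∈ S
  delta : ∀ s, s + 2 ≤ q → dd m n s - dd m n (s + 1) ∈ S
  delta_last : l = 0 → ∀ s, s + 1 = q → dd m n s - dd m n q ∈ S
  corner : l ≠ 0 → ∀ s, s + 1 = q → dd m n s - ee m n 0 ∈ S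
  back : ∀ t, t + 1 = l → ee m n t - dd m n q ∈ S

namespace ContainsChainRoots

variable {m n q l : ℕ} {S : Set (Vmn m n)}

lemma eps_mem_oddRefl (hS : ContainsChainRoots m n q l S) (hq : q < m) (hl : l < n) {t : ℕ}
    (ht : t + 1 < n) (htl : t ≠ l) :
    ee m n t - ee m n (t + 1) ∈ oddRefl m n (dd m n q - ee m n l) S := by
  by_cases hback : t + 1 = l
  · have hpair : Bform m n (ee m n t - dd m n q) (dd m n q - ee m n l) ≠ 0 := by
      simp [Bform_sub_left, Bform_ee_left (by omega : t < n), Bform_dd_left hq, htl]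
    simpa [← hback] using add_mem_oddRefl (hS.back t hback) hpair
  · refine mem_oddRefl_of_orthogonal (hS.eps t ht hback) (fun h => ?_) ?_
    · simpa using congrFun h (Sum.inl ⟨q, hq⟩)
    · simp [Bform_sub_left, Bform_ee_left (by omega : t < n), Bform_ee_left ht, htl, hback]

lemma delta_mem_oddRefl (hS : ContainsChainRoots m n q l S) (hq : q < m) (hl : l < n) {s : ℕ}
    (hs : s + 2 ≤ q) : dd m n s - dd m n (s + 1) ∈ oddRefl m n (dd m n q - ee m n l) S := by
  refine mem_oddRefl_of_orthogonal (hS.delta s hs) (fun h => ?_) ?_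
  · simpa using congrFun h (Sum.inr ⟨l, hl⟩)
  · have hsq : s ≠ q := by omega
    have hsq' : s + 1 ≠ q := by omega
    simp [Bform_sub_left, Bform_dd_left (by omega : s < m), Bform_dd_left (by omega : s + 1 < m),
      hsq, hsq']

lemma corner_mem_oddRefl (hS : ContainsChainRoots m n (q + 1) l S) (hq : q + 1 < m) (hl : l < n) :
    dd m n q - ee m n 0 ∈ oddRefl m n (dd m n (q + 1) - ee m n l) S := by
  by_cases hl0 : l = 0
  · subst hl0
    have hpair : Bform m n (dd m n q - dd m n (q + 1)) (dd m n (q + 1) - ee m n 0) ≠ 0 := by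
      simp [Bform_sub_left, Bform_dd_left (by omega : q < m), Bform_dd_left hq]
    simpa using add_mem_oddRefl (hS.delta_last rfl q rfl) hpair
  · refine mem_oddRefl_of_orthogonal (hS.corner hl0 q rfl) (fun h => ?_) ?_
    · simpa using congrFun h (Sum.inl ⟨q + 1, hq⟩)
    · simp [Bform_sub_left, Bform_dd_left (by omega : q < m), Bform_ee_left (by omega : 0 < n),
        Ne.symm hl0]

lemma oddRefl_next_col (hS : ContainsChainRoots m n q l S) (hq : q < m) (hl : l + 1 < n) :
    ContainsChainRoots m n q (l + 1) (oddRefl m n (dd m n q - ee m n l) S) where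
  head := by
    have hpair : Bform m n (ee m n l - ee m n (l + 1)) (dd m n q - ee m n l) ≠ 0 := by
      simp [Bform_sub_left, Bform_ee_left (by omega : l < n), Bform_ee_left hl]
    simpa using add_mem_oddRefl (hS.eps l hl (by omega)) hpair
  eps _ ht htl := hS.eps_mem_oddRefl hq (by omega) ht (by omega)
  delta _ hs := hS.delta_mem_oddRefl hq (by omega) hs
  delta_last h := absurd h (by omega)
  corner _ s hs := by
    subst hs
    exact hS.corner_mem_oddRefl hq (by omega)
  back t ht := by
    obtain rfl : t = l := by omega
    rw [← neg_sub (dd m n q)]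
    exact neg_mem_oddRefl

lemma oddRefl_next_row (hS : ContainsChainRoots m n (q + 1) l S) (hq : q + 1 < m) (hl : l + 1 = n) :
    ContainsChainRoots m n q 0 (oddRefl m n (dd m n (q + 1) - ee m n l) S) where
  head := hS.corner_mem_oddRefl hq (by omega)
  eps _ ht _ := hS.eps_mem_oddRefl hq (by omega) ht (by omega)
  delta _ hs := hS.delta_mem_oddRefl hq (by omega) (by omega)
  delta_last _ s hs := by
    subst hs
    exact hS.delta_mem_oddRefl hq (by omega) le_rfl
  corner h := absurd rfl h
  back _ h := absurd h (by omega)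

end ContainsChainRoots

lemma containsChainRoots_stdSimple (m n : ℕ) : ContainsChainRoots m n (m - 1) 0 (stdSimple m n) where
  head := Or.inl (Or.inr rfl)
  eps t ht _ := Or.inr ⟨t, ht, rfl⟩
  delta s hs := Or.inl (Or.inl ⟨s, by omega, rfl⟩)
  delta_last _ s hs := Or.inl (Or.inl ⟨s, by omega, by rw [hs]⟩)
  corner h := absurd rfl h
  back _ h := absurd h (by omega)

lemma containsChainRoots_simpleSys {m n : ℕ} (hn : 0 < n) :
    ∀ i, i < m * n → ContainsChainRoots m n (m - 1 - i / n) (i % n) (simpleSys m n i)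
  | 0, _ => by simpa [simpleSys] using containsChainRoots_stdSimple m n
  | i + 1, hi => by
    have hS := containsChainRoots_simpleSys (m := m) hn i (by omega)
    have hrow : i / n < m := (Nat.div_lt_iff_lt_mul hn).2 (by omega)
    have hsplit := Nat.div_add_mod i n
    have hcol := Nat.mod_lt i hn
    rw [simpleSys_succ, betaRoot_succ]
    rcases Nat.lt_or_ge (i % n + 1) n with hnext_col | hlast_col
    · obtain ⟨hdiv, hmod⟩ : (i + 1) / n = i / n ∧ (i + 1) % n = i % n + 1 :=
        (Nat.div_mod_unique hn).2 ⟨by omega, hnext_col⟩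
      rw [hdiv, hmod]
      generalize i / n = k at hS hrow ⊢
      exact hS.oddRefl_next_col (by omega) hnext_col
    · obtain ⟨hdiv, hmod⟩ : (i + 1) / n = i / n + 1 ∧ (i + 1) % n = 0 :=
        (Nat.div_mod_unique hn).2 ⟨by rw [Nat.mul_add]; omega, hn⟩
      have hnext : i / n + 1 < m := by
        rw [← hdiv, Nat.div_lt_iff_lt_mul hn]
        exact hi
      rw [hdiv, hmod]
      generalize i / n = k at hS hnext ⊢
      rw [show m - 1 - k = (m - 1 - (k + 1)) + 1 by omega] at hS ⊢
      exact hS.oddRefl_next_row (by omega) (by omega)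

theorem statement1_general (m n : ℕ) :
    ∀ i : ℕ, 1 ≤ i → i ≤ m * n →
      betaRoot m n i ∈ simpleSys m n (i - 1) ∧ -betaRoot m n i ∈ simpleSys m n i := by
  intro i hi hin
  have hn : 0 < n := Nat.pos_of_ne_zero (by rintro rfl; omega)
  obtain ⟨j, rfl⟩ : ∃ j, i = j + 1 := ⟨i - 1, by omega⟩
  refine ⟨?_, simpleSys_succ m n j ▸ neg_mem_oddRefl⟩
  rw [betaRoot_succ]
  exact (containsChainRoots_simpleSys hn j (by omega)).head

/-- For every `1 ≤ i ≤ mn`, the root `β_i` belongs to `Π^{(i-1)}` (so the odd reflection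
`r̂_{β_i}` can indeed be applied to `Π^{(i-1)}`), and `-β_i` belongs to `Π^{(i)}`.
Consequently the chain `Π^{(1)}, …, Π^{(mn)}` of simple root systems is well defined,
each `Π^{(i)}` arising from `Π^{(i-1)}` by the odd reflection at `β_i`. -/
theorem statement1 (m n : ℕ) (hm : 1 ≤ m) (hn : 1 ≤ n) :
    ∀ i : ℕ, 1 ≤ i → i ≤ m * n →
      betaRoot m n i ∈ simpleSys m n (i - 1) ∧ -betaRoot m n i ∈ simpleSys m n i :=
  statement1_general m n
end
end

section
/- Let w_0 : X → X be the ℤ-linear involution given by w_0(δ_i) = δ_{m+1−i} (1 ≤ i ≤ m) and w_0(ε_j) = ε_{n+1−j} (1 ≤ j ≤ n), i.e. the longest element of the Weyl group W = S_m × S_n. Then w_0 maps Π^{(mn)} onto −Π = {−α : α ∈ Π}. Equivalently, the longest element ŵ_ℓ = w_0 w_1 of the super Weyl group, where w_1 = r̂_{β_mn} ∘ ⋯ ∘ r̂_{β_1}, sends the standard simple system Π to −Π. -/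
open scoped BigOperators

noncomputable section

/-- The longest element `w_0` of the Weyl group `W = S_m × S_n`, acting ℤ-linearly on the
weight space by `w_0(δ_i) = δ_{m+1-i}` and `w_0(ε_j) = ε_{n+1-j}`. -/
def wZero (m n : ℕ) (f : Vmn m n) : Vmn m n := fun x =>
  match x with
  | Sum.inl a => f (Sum.inl ⟨m - 1 - (a : ℕ), by have := a.isLt; omega⟩)
  | Sum.inr b => f (Sum.inr ⟨n - 1 - (b : ℕ), by have := b.isLt; omega⟩)

/-!
Each simple system `Π^{(i)}` is the chain `{v₀ - v₁, …, v_{m+n-2} - v_{m+n-1}}` of an ordering `v`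
of the basis `δ₀, …, δ_{m-1}, ε₀, …, ε_{n-1}`, and `Π` is the chain of the standard ordering.
When `v p = δ_c` and `v (p + 1) = ε_l`, the odd reflection at `β = v p - v (p + 1)` simply swaps
these two entries: the two roots adjacent to `β` are the only ones pairing nontrivially with it
and get `β` added, `β` becomes `-β`, and all other roots are kept. So `r̂_{β_1}, …, r̂_{β_{mn}}`
move `δ_{m-1}`, then `δ_{m-2}`, …, then `δ₀` past all of `ε₀, …, ε_{n-1}`, ending at the
ordering `ε₀, …, ε_{n-1}, δ₀, …, δ_{m-1}`. Then `w₀` turns this into the reverse of the standard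
ordering, and reversing an ordering negates its chain.
-/

section Pairing

variable {m n : ℕ}

lemma Bform_sub_right (f g h : Vmn m n) :
    Bform m n f (g - h) = Bform m n f g - Bform m n f h := by
  simp only [Bform, Pi.sub_apply, mul_sub, Finset.sum_sub_distrib]
  ring

lemma sum_fin_ite_mul_ite (N a b : ℕ) :
    ∑ x : Fin N, (if (x : ℕ) = a then (1 : ℚ) else 0) * (if (x : ℕ) = b then 1 else 0)
      = if a = b ∧ a < N then 1 else 0 := by
  rw [Fin.sum_univ_eq_sum_range (fun x => (if x = a then (1 : ℚ) else 0) * if x = b then 1 else 0)]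
  simp only [ite_mul, one_mul, zero_mul, Finset.sum_ite_eq', Finset.mem_range]
  by_cases h : a = b <;> simp [h]

lemma Bform_dd_dd (a b : ℕ) :
    Bform m n (dd m n a) (dd m n b) = if a = b ∧ a < m then 1 else 0 := by
  simp only [Bform, dd, sum_fin_ite_mul_ite]
  simp

lemma Bform_ee_ee (a b : ℕ) :
    Bform m n (ee m n a) (ee m n b) = if a = b ∧ a < n then -1 else 0 := by
  simp only [Bform, ee, sum_fin_ite_mul_ite]
  split_ifs <;> simp

lemma Bform_dd_ee (a b : ℕ) : Bform m n (dd m n a) (ee m n b) = 0 := by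
  simp [Bform, dd, ee]

lemma Bform_ee_dd (a b : ℕ) : Bform m n (ee m n a) (dd m n b) = 0 := by
  simp [Bform, dd, ee]

end Pairing

def chainSet {V : Type*} [Sub V] (v : ℕ → V) (N : ℕ) : Set V :=
  {α | ∃ j, j + 1 < N ∧ α = v j - v (j + 1)}

section Chain

variable {V : Type*} [AddCommGroup V]

lemma chainSet_congr {u v : ℕ → V} {N : ℕ} (h : ∀ j < N, u j = v j) :
    chainSet u N = chainSet v N := by
  ext α
  simp only [chainSet, Set.mem_ofPred_eq]
  refine exists_congr fun j => and_congr_right fun hj => ?_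
  rw [h j (by omega), h (j + 1) hj]

lemma image_chainSet {W : Type*} [AddCommGroup W] (f : V → W)
    (hf : ∀ x y, f (x - y) = f x - f y) (v : ℕ → V) (N : ℕ) :
    f '' chainSet v N = chainSet (fun j => f (v j)) N := by
  ext α
  simp only [chainSet, Set.mem_image, Set.mem_ofPred_eq]
  constructor
  · rintro ⟨_, ⟨j, hj, rfl⟩, rfl⟩
    exact ⟨j, hj, hf _ _⟩
  · rintro ⟨j, hj, rfl⟩
    exact ⟨_, ⟨j, hj, rfl⟩, hf _ _⟩

lemma chainSet_reverse (v : ℕ → V) (N : ℕ) :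
    chainSet (fun j => v (N - 1 - j)) N = (fun x => -x) '' chainSet v N := by
  ext α
  simp only [chainSet, Set.mem_image, Set.mem_ofPred_eq]
  constructor
  · rintro ⟨j, hj, rfl⟩
    refine ⟨_, ⟨N - 2 - j, by omega, rfl⟩, ?_⟩
    rw [neg_sub, show N - 2 - j + 1 = N - 1 - j by omega, show N - 2 - j = N - 1 - (j + 1) by omega]
  · rintro ⟨_, ⟨j, hj, rfl⟩, rfl⟩
    refine ⟨N - 2 - j, by omega, ?_⟩
    rw [neg_sub, show N - 1 - (N - 2 - j) = j + 1 by omega,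
      show N - 1 - (N - 2 - j + 1) = j by omega]

variable (v : ℕ → V) {p j : ℕ}

lemma comp_swap_sub_self :
    (v ∘ Equiv.swap p (p + 1)) p - (v ∘ Equiv.swap p (p + 1)) (p + 1) = -(v p - v (p + 1)) := by
  simp [Equiv.swap_apply_left, Equiv.swap_apply_right]

lemma comp_swap_sub_of_adjacent (hj : j + 1 = p ∨ j = p + 1) :
    (v ∘ Equiv.swap p (p + 1)) j - (v ∘ Equiv.swap p (p + 1)) (j + 1)
      = v j - v (j + 1) + (v p - v (p + 1)) := by
  rcases hj with rfl | rfl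
  · rw [Function.comp_apply, Function.comp_apply,
      Equiv.swap_apply_of_ne_of_ne (by omega) (by omega), Equiv.swap_apply_left]
    abel
  · rw [Function.comp_apply, Function.comp_apply, Equiv.swap_apply_right,
      Equiv.swap_apply_of_ne_of_ne (by omega) (by omega)]
    abel

lemma comp_swap_sub_of_far (h₁ : j + 1 ≠ p) (h₂ : j ≠ p) (h₃ : j ≠ p + 1) :
    (v ∘ Equiv.swap p (p + 1)) j - (v ∘ Equiv.swap p (p + 1)) (j + 1) = v j - v (j + 1) := by
  rw [Function.comp_apply, Function.comp_apply, Equiv.swap_apply_of_ne_of_ne h₂ h₃,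
    Equiv.swap_apply_of_ne_of_ne h₁ (by omega)]

end Chain

section OddReflection

variable {m n N p : ℕ} {v : ℕ → Vmn m n}

lemma Bform_chain_ne_zero_iff
    (hδ : ∀ j < N, Bform m n (v j) (v p) = if j = p then 1 else 0)
    (hε : ∀ j < N, Bform m n (v j) (v (p + 1)) = if j = p + 1 then -1 else 0)
    {j : ℕ} (hj : j + 1 < N) :
    Bform m n (v j - v (j + 1)) (v p - v (p + 1)) ≠ 0 ↔ j + 1 = p ∨ j = p + 1 := by
  rw [Bform_sub_left, Bform_sub_right, Bform_sub_right, hδ j (by omega), hε j (by omega),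
    hδ (j + 1) hj, hε (j + 1) hj]
  split_ifs <;> first | omega | (norm_num; omega)

lemma chain_eq_iff (hp : p + 1 < N)
    (hδ : ∀ j < N, Bform m n (v j) (v p) = if j = p then 1 else 0)
    {j : ℕ} (hj : j + 1 < N) :
    v j - v (j + 1) = v p - v (p + 1) ↔ j = p := by
  refine ⟨fun h => ?_, fun h => h ▸ rfl⟩
  have hpair := congrArg (fun x => Bform m n x (v p)) h
  simp only [Bform_sub_left] at hpair
  rw [hδ j (by omega), hδ (j + 1) hj, hδ p (by omega), hδ (p + 1) hp] at hpair
  split_ifs at hpair <;> first | omega | norm_num at hpair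

theorem oddRefl_chainSet (hp : p + 1 < N)
    (hδ : ∀ j < N, Bform m n (v j) (v p) = if j = p then 1 else 0)
    (hε : ∀ j < N, Bform m n (v j) (v (p + 1)) = if j = p + 1 then -1 else 0) :
    oddRefl m n (v p - v (p + 1)) (chainSet v N) = chainSet (v ∘ Equiv.swap p (p + 1)) N := by
  ext α
  simp only [oddRefl, chainSet, Set.mem_union, Set.mem_ofPred_eq, Set.mem_singleton_iff]
  constructor
  · rintro ((⟨⟨j, hj, rfl⟩, hne, horth⟩ | ⟨_, ⟨j, hj, rfl⟩, hpair, rfl⟩) | rfl)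
    · have hfar := (Bform_chain_ne_zero_iff hδ hε hj).not.mp (not_not.mpr horth)
      have hjp := (chain_eq_iff hp hδ hj).not.mp hne
      exact ⟨j, hj, (comp_swap_sub_of_far v (by omega) hjp (by omega)).symm⟩
    · exact ⟨j, hj,
        (comp_swap_sub_of_adjacent v ((Bform_chain_ne_zero_iff hδ hε hj).mp hpair)).symm⟩
    · exact ⟨p, hp, (comp_swap_sub_self v).symm⟩
  · rintro ⟨j, hj, rfl⟩
    by_cases hjp : j = p
    · subst hjp
      exact Or.inr (comp_swap_sub_self v)
    by_cases hadj : j + 1 = p ∨ j = p + 1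
    · exact Or.inl (Or.inr ⟨_, ⟨j, hj, rfl⟩, (Bform_chain_ne_zero_iff hδ hε hj).mpr hadj,
        comp_swap_sub_of_adjacent v hadj⟩)
    · rw [not_or] at hadj
      rw [comp_swap_sub_of_far v hadj.1 hjp hadj.2]
      exact Or.inl (Or.inl ⟨⟨j, hj, rfl⟩, (chain_eq_iff hp hδ hj).not.mpr hjp,
        not_not.mp ((Bform_chain_ne_zero_iff hδ hε hj).not.mpr (by omega))⟩)

end OddReflection

/-- The ordering `δ₀, …, δ_{c-1}, ε₀, …, ε_{l-1}, δ_c, ε_l, …, ε_{n-1}, δ_{c+1}, …, δ_{m-1}`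
(0-indexed) of the basis, in which `δ_c` has been moved past `ε₀, …, ε_{l-1}`. -/
def stageSeq (m n c l : ℕ) (j : ℕ) : Vmn m n :=
  if j < c then dd m n j
  else if j < c + l then ee m n (j - c)
  else if j = c + l then dd m n c
  else if j ≤ c + n then ee m n (j - c - 1)
  else dd m n (j - n)

section Stages

variable {m n : ℕ}

lemma stageSeq_moving (c l : ℕ) : stageSeq m n c l (c + l) = dd m n c := by
  rw [stageSeq, if_neg (by omega), if_neg (by omega), if_pos rfl]

lemma stageSeq_moving_succ {c l : ℕ} (hl : l < n) :
    stageSeq m n c l (c + l + 1) = ee m n l := by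
  rw [stageSeq, if_neg (by omega), if_neg (by omega), if_neg (by omega), if_pos (by omega),
    show c + l + 1 - c - 1 = l by omega]

lemma Bform_stageSeq_dd {c : ℕ} (hc : c < m) (l j : ℕ) :
    Bform m n (stageSeq m n c l j) (dd m n c) = if j = c + l then 1 else 0 := by
  unfold stageSeq
  split_ifs <;> simp only [Bform_dd_dd, Bform_ee_dd] <;> (try split_ifs) <;>
    first | rfl | omega | simp_all

lemma Bform_stageSeq_ee {c l : ℕ} (hl : l < n) (j : ℕ) :
    Bform m n (stageSeq m n c l j) (ee m n l) = if j = c + l + 1 then -1 else 0 := by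
  unfold stageSeq
  split_ifs <;> simp only [Bform_ee_ee, Bform_dd_ee] <;> (try split_ifs) <;> first | rfl | omega

lemma stageSeq_succ {c l : ℕ} (hl : l < n) :
    stageSeq m n c (l + 1) = stageSeq m n c l ∘ Equiv.swap (c + l) (c + l + 1) := by
  funext j
  simp only [Function.comp_apply, Equiv.swap_apply_def, stageSeq]
  split_ifs <;> first | rfl | omega | (congr 1; omega)

lemma stageSeq_succ_row (c : ℕ) : stageSeq m n (c + 1) n = stageSeq m n c 0 := by
  funext j
  simp only [stageSeq]
  split_ifs <;> first | rfl | omega | (congr 1 <;> omega)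

lemma stageSeq_initial_of_lt {j : ℕ} (hj : j < m) : stageSeq m n (m - 1) 0 j = dd m n j := by
  unfold stageSeq
  split_ifs <;> first | rfl | omega | (congr 1; omega)

lemma stageSeq_initial_of_ge (hm : 1 ≤ m) {j : ℕ} (hmj : m ≤ j) (hj : j < m + n) :
    stageSeq m n (m - 1) 0 j = ee m n (j - m) := by
  unfold stageSeq
  split_ifs <;> first | rfl | omega | (congr 1; omega)

lemma stageSeq_final_of_lt {j : ℕ} (hj : j < n) : stageSeq m n 0 n j = ee m n j := by
  unfold stageSeq
  split_ifs <;> first | rfl | omega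

lemma stageSeq_final_of_ge {j : ℕ} (hj : n ≤ j) : stageSeq m n 0 n j = dd m n (j - n) := by
  unfold stageSeq
  split_ifs <;> first | rfl | omega | (congr 1; omega)

end Stages

section Evolution

variable {m n : ℕ}

lemma betaRoot_eq {k l : ℕ} (hl : l < n) :
    betaRoot m n (k * n + l + 1) = dd m n (m - 1 - k) - ee m n l := by
  have hdiv : (k * n + l) / n = k := by
    rw [mul_comm, Nat.mul_add_div (by omega), Nat.div_eq_of_lt hl, add_zero]
  have hmod : (k * n + l) % n = l := by
    rw [mul_comm, Nat.mul_add_mod, Nat.mod_eq_of_lt hl]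
  rw [betaRoot, Nat.add_sub_cancel, hdiv, hmod]

lemma oddRefl_chainSet_stageSeq {c l : ℕ} (hc : c < m) (hl : l < n) :
    oddRefl m n (dd m n c - ee m n l) (chainSet (stageSeq m n c l) (m + n))
      = chainSet (stageSeq m n c (l + 1)) (m + n) := by
  have h := oddRefl_chainSet (v := stageSeq m n c l) (N := m + n) (p := c + l) (by omega)
    (fun j _ => by rw [stageSeq_moving]; exact Bform_stageSeq_dd hc l j)
    (fun j _ => by rw [stageSeq_moving_succ hl]; exact Bform_stageSeq_ee hl j)
  rwa [stageSeq_moving, stageSeq_moving_succ hl, ← stageSeq_succ hl] at h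

lemma stdSimple_eq_chainSet (hm : 1 ≤ m) (hn : 1 ≤ n) :
    stdSimple m n = chainSet (stageSeq m n (m - 1) 0) (m + n) := by
  ext α
  simp only [stdSimple, chainSet, Set.mem_union, Set.mem_ofPred_eq, Set.mem_singleton_iff]
  constructor
  · rintro ((⟨s, hs, rfl⟩ | rfl) | ⟨t, ht, rfl⟩)
    · exact ⟨s, by omega, by rw [stageSeq_initial_of_lt (by omega), stageSeq_initial_of_lt hs]⟩
    · refine ⟨m - 1, by omega, ?_⟩
      rw [stageSeq_initial_of_lt (by omega), Nat.sub_add_cancel hm,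
        stageSeq_initial_of_ge hm le_rfl (by omega), Nat.sub_self]
    · refine ⟨m + t, by omega, ?_⟩
      rw [stageSeq_initial_of_ge hm (by omega) (by omega),
        stageSeq_initial_of_ge hm (by omega) (by omega), Nat.add_sub_cancel_left, add_assoc,
        Nat.add_sub_cancel_left]
  · rintro ⟨j, hj, rfl⟩
    rcases lt_trichotomy (j + 1) m with hδ | hmid | hε
    · exact Or.inl (Or.inl ⟨j, hδ, by
        rw [stageSeq_initial_of_lt (by omega), stageSeq_initial_of_lt hδ]⟩)
    · refine Or.inl (Or.inr ?_)
      rw [stageSeq_initial_of_lt (by omega), hmid, stageSeq_initial_of_ge hm le_rfl (by omega),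
        Nat.sub_self, show j = m - 1 by omega]
    · refine Or.inr ⟨j - m, by omega, ?_⟩
      rw [stageSeq_initial_of_ge hm (by omega) (by omega), stageSeq_initial_of_ge hm (by omega) hj,
        show j + 1 - m = j - m + 1 by omega]

lemma simpleSys_add_eq_chainSet {k : ℕ} (hk : k < m)
    (hrow : simpleSys m n (k * n) = chainSet (stageSeq m n (m - 1 - k) 0) (m + n)) {l : ℕ}
    (hl : l ≤ n) : simpleSys m n (k * n + l) = chainSet (stageSeq m n (m - 1 - k) l) (m + n) := by
  induction l with
  | zero => exact hrow
  | succ l ih =>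
    rw [← add_assoc, simpleSys, ih (by omega), betaRoot_eq (by omega),
      oddRefl_chainSet_stageSeq (by omega) (by omega)]

lemma simpleSys_mul_eq_chainSet (hm : 1 ≤ m) (hn : 1 ≤ n) {k : ℕ} (hk : k < m) :
    simpleSys m n (k * n) = chainSet (stageSeq m n (m - 1 - k) 0) (m + n) := by
  induction k with
  | zero => rw [zero_mul, Nat.sub_zero, simpleSys, stdSimple_eq_chainSet hm hn]
  | succ k ih =>
    rw [Nat.succ_mul, simpleSys_add_eq_chainSet (by omega) (ih (by omega)) le_rfl,
      show m - 1 - k = m - 1 - (k + 1) + 1 by omega, stageSeq_succ_row]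

lemma simpleSys_mn_eq_chainSet (hm : 1 ≤ m) (hn : 1 ≤ n) :
    simpleSys m n (m * n) = chainSet (stageSeq m n 0 n) (m + n) := by
  obtain ⟨k, rfl⟩ : ∃ k, m = k + 1 := ⟨m - 1, by omega⟩
  rw [Nat.succ_mul, simpleSys_add_eq_chainSet (by omega) (simpleSys_mul_eq_chainSet hm hn
    (by omega)) le_rfl, Nat.add_sub_cancel, Nat.sub_self]

end Evolution

section WeylGroup

variable {m n : ℕ}

lemma wZero_sub (f g : Vmn m n) : wZero m n (f - g) = wZero m n f - wZero m n g := by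
  funext x
  cases x <;> rfl

lemma wZero_dd {a : ℕ} (ha : a < m) : wZero m n (dd m n a) = dd m n (m - 1 - a) := by
  funext x
  cases x with
  | inl b =>
    dsimp only [wZero, dd]
    have := b.isLt
    split_ifs <;> first | rfl | omega
  | inr b => rfl

lemma wZero_ee {b : ℕ} (hb : b < n) : wZero m n (ee m n b) = ee m n (n - 1 - b) := by
  funext x
  cases x with
  | inl a => rfl
  | inr a =>
    dsimp only [wZero, ee]
    have := a.isLt
    split_ifs <;> first | rfl | omega

lemma wZero_stageSeq_final (hm : 1 ≤ m) {j : ℕ} (hj : j < m + n) :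
    wZero m n (stageSeq m n 0 n j) = stageSeq m n (m - 1) 0 (m + n - 1 - j) := by
  by_cases hjn : j < n
  · rw [stageSeq_final_of_lt hjn, wZero_ee hjn,
      stageSeq_initial_of_ge hm (by omega) (by omega)]
    congr 1
    omega
  · rw [stageSeq_final_of_ge (by omega), wZero_dd (by omega), stageSeq_initial_of_lt (by omega)]
    congr 1
    omega

end WeylGroup

/-- The longest element `w_0` of the Weyl group maps `Π^{(mn)}` onto `-Π`; equivalently,
the longest element `ŵ_ℓ = w_0 w_1` of the super Weyl group, where
`w_1 = r̂_{β_{mn}} ∘ ⋯ ∘ r̂_{β_1}`, sends the standard simple system `Π` to `-Π`. -/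
theorem statement2 (m n : ℕ) (hm : 1 ≤ m) (hn : 1 ≤ n) :
    wZero m n '' simpleSys m n (m * n) = (fun v => -v) '' stdSimple m n := by
  rw [simpleSys_mn_eq_chainSet hm hn, image_chainSet _ wZero_sub,
    chainSet_congr (v := fun j => stageSeq m n (m - 1) 0 (m + n - 1 - j))
      fun j hj => wZero_stageSeq_final hm hj, chainSet_reverse,
    stdSimple_eq_chainSet hm hn]
end
end

section
/- For every 0 ≤ i ≤ mn, the set Π^{(i)} is a simple system for the positive system Φ^{+,i} := {−β_1, …, −β_i} ∪ (Φ⁺ \ {β_1, …, β_i}): namely, Π^{(i)} is contained in Φ^{+,i}, Π^{(i)} is a linearly independent subset of X of cardinality m + n − 1, and every element of Φ^{+,i} is a linear combination of elements of Π^{(i)} with nonnegative integer coefficients. -/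
open scoped BigOperators

noncomputable section

/-- The set `Φ⁺` of positive roots (even and odd) of `GL(m|n)`. -/
def posRoots (m n : ℕ) : Set (Vmn m n) :=
  {v | ∃ s t, s < t ∧ t < m ∧ v = dd m n s - dd m n t} ∪
    {v | ∃ s t, s < t ∧ t < n ∧ v = ee m n s - ee m n t} ∪
    {v | ∃ s t, s < m ∧ t < n ∧ v = dd m n s - ee m n t}

/-- The positive system `Φ^{+,i} = {-β_1, …, -β_i} ∪ (Φ⁺ \ {β_1, …, β_i})`. -/
def posSys (m n i : ℕ) : Set (Vmn m n) :=
  {v | ∃ j, 1 ≤ j ∧ j ≤ i ∧ v = -betaRoot m n j} ∪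
    (posRoots m n \ {v | ∃ j, 1 ≤ j ∧ j ≤ i ∧ v = betaRoot m n j})

namespace St3
variable {m n : ℕ}

def Bv (m n : ℕ) (x : Fin m ⊕ Fin n) : Vmn m n := fun y => if y = x then 1 else 0

lemma dd_eq {s : ℕ} (hs : s < m) : dd m n s = Bv m n (Sum.inl ⟨s, hs⟩) := by
  funext y
  cases y with
  | inl a => simp [dd, Bv, Fin.ext_iff]
  | inr b => simp [dd, Bv]

lemma ee_eq {t : ℕ} (ht : t < n) : ee m n t = Bv m n (Sum.inr ⟨t, ht⟩) := by
  funext y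
  cases y with
  | inl a => simp [ee, Bv]
  | inr b => simp [ee, Bv, Fin.ext_iff]

lemma Bv_apply (x y : Fin m ⊕ Fin n) : Bv m n x y = if y = x then 1 else 0 := rfl

lemma sub_eq_sub {x y x' y' : Fin m ⊕ Fin n} (hxy : x ≠ y) (hxy' : x' ≠ y')
    (h : Bv m n x - Bv m n y = Bv m n x' - Bv m n y') : x = x' ∧ y = y' := by
  have h1 := congrFun h x
  have h2 := congrFun h y
  simp only [Pi.sub_apply, Bv_apply] at h1 h2
  constructor
  · by_contra hne
    rw [if_neg hxy, if_neg hne] at h1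
    split_ifs at h1 <;> norm_num at h1
  · by_contra hne
    rw [if_neg (Ne.symm hxy), if_neg hne] at h2
    split_ifs at h2 <;> norm_num at h2

def eta (m n : ℕ) : Fin m ⊕ Fin n → ℚ := Sum.elim (fun _ => 1) (fun _ => -1)

lemma Bform_Bv (x y : Fin m ⊕ Fin n) :
    Bform m n (Bv m n x) (Bv m n y) = if x = y then eta m n x else 0 := by
  cases x <;> cases y <;>
    simp [Bform, Bv, eta, mul_ite, ite_mul, Finset.sum_ite_eq'] <;>
    split_ifs <;> simp_all

lemma Bform_sub_left (f g h : Vmn m n) :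
    Bform m n (f - g) h = Bform m n f h - Bform m n g h := by
  simp [Bform, sub_mul, Finset.sum_sub_distrib]; ring

lemma Bform_sub_right (f g h : Vmn m n) :
    Bform m n f (g - h) = Bform m n f g - Bform m n f h := by
  simp [Bform, mul_sub, Finset.sum_sub_distrib]; ring

lemma Bform_sub_sub (x y x' y' : Fin m ⊕ Fin n) :
    Bform m n (Bv m n x - Bv m n y) (Bv m n x' - Bv m n y')
      = (if x = x' then eta m n x' else 0) - (if x = y' then eta m n y' else 0)
        - (if y = x' then eta m n x' else 0) + (if y = y' then eta m n y' else 0) := by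
  rw [Bform_sub_left, Bform_sub_right, Bform_sub_right, Bform_Bv, Bform_Bv, Bform_Bv, Bform_Bv]
  have e1 : (if x = x' then eta m n x else 0) = (if x = x' then eta m n x' else 0) := by
    split_ifs with h <;> simp [h]
  have e2 : (if x = y' then eta m n x else 0) = (if x = y' then eta m n y' else 0) := by
    split_ifs with h <;> simp [h]
  have e3 : (if y = x' then eta m n y else 0) = (if y = x' then eta m n x' else 0) := by
    split_ifs with h <;> simp [h]
  have e4 : (if y = y' then eta m n y else 0) = (if y = y' then eta m n y' else 0) := by
    split_ifs with h <;> simp [h]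
  rw [e1, e2, e3, e4]; ring

variable {m n : ℕ}

/-- position function for the simple system after `i = q*n + r` odd reflections -/
def pf (m n q r : ℕ) : (Fin m ⊕ Fin n) → ℕ := fun x =>
  match x with
  | Sum.inl a => if (a : ℕ) + q + 1 < m then (a : ℕ)
      else if (a : ℕ) + q + 1 = m then (a : ℕ) + r else (a : ℕ) + n
  | Sum.inr b => if (b : ℕ) < r then m - q - 1 + (b : ℕ) else m - q + (b : ℕ)

variable {q r : ℕ}

lemma pf_lt (hq : q ≤ m) (hr : r < n) (x : Fin m ⊕ Fin n) : pf m n q r x < m + n := by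
  cases x with
  | inl a => have := a.isLt; simp only [pf]; split_ifs <;> omega
  | inr b => have := b.isLt; simp only [pf]; split_ifs <;> omega

lemma pf_inj (hq : q ≤ m) (hr : r < n) (hqm : q = m → r = 0) :
    Function.Injective (pf m n q r) := by
  intro x y h
  cases x with
  | inl a =>
    cases y with
    | inl a' =>
      have h1 := a.isLt; have h2 := a'.isLt
      simp only [pf] at h
      have : (a : ℕ) = (a' : ℕ) := by split_ifs at h <;> omega
      exact congrArg Sum.inl (Fin.ext this)
    | inr b' =>
      exfalso
      have h1 := a.isLt; have h2 := b'.isLt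
      simp only [pf] at h
      split_ifs at h <;> omega
  | inr b =>
    cases y with
    | inl a' =>
      exfalso
      have h1 := b.isLt; have h2 := a'.isLt
      simp only [pf] at h
      split_ifs at h <;> omega
    | inr b' =>
      have h1 := b.isLt; have h2 := b'.isLt
      simp only [pf] at h
      have : (b : ℕ) = (b' : ℕ) := by split_ifs at h <;> omega
      exact congrArg Sum.inr (Fin.ext this)

lemma pf_inl_lt_inl (hq : q ≤ m) (hr : r < n) {s t : Fin m} :
    pf m n q r (Sum.inl s) < pf m n q r (Sum.inl t) ↔ (s : ℕ) < (t : ℕ) := by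
  have h1 := s.isLt; have h2 := t.isLt
  simp only [pf]; split_ifs <;> omega

lemma pf_inr_lt_inr (hq : q ≤ m) (hr : r < n) {s t : Fin n} :
    pf m n q r (Sum.inr s) < pf m n q r (Sum.inr t) ↔ (s : ℕ) < (t : ℕ) := by
  have h1 := s.isLt; have h2 := t.isLt
  simp only [pf]; split_ifs <;> omega

lemma pf_inr_lt_inl (hq : q ≤ m) (hr : r < n) (hqm : q = m → r = 0) {s : Fin m} {t : Fin n} :
    pf m n q r (Sum.inr t) < pf m n q r (Sum.inl s) ↔
      (m - 1 - (s : ℕ) < q ∨ (m - 1 - (s : ℕ) = q ∧ (t : ℕ) < r)) := by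
  have h1 := s.isLt; have h2 := t.isLt
  simp only [pf]; split_ifs <;> omega

lemma lex_le (hn : 0 < n) {k t u r : ℕ} (ht : t < n) (hr : r < n) :
    k * n + t + 1 ≤ u * n + r ↔ (k < u ∨ (k = u ∧ t < r)) := by
  constructor
  · intro h
    rcases lt_trichotomy k u with h' | h' | h'
    · exact Or.inl h'
    · subst h'; exact Or.inr ⟨rfl, by omega⟩
    · exfalso
      have : (u + 1) * n ≤ k * n := Nat.mul_le_mul_right n (by omega)
      have e : (u + 1) * n = u * n + n := by ring
      omega
  · rintro (h' | ⟨rfl, h'⟩)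
    · have : (k + 1) * n ≤ u * n := Nat.mul_le_mul_right n (by omega)
      have e : (k + 1) * n = k * n + n := by ring
      omega
    · omega

lemma betaRoot_eq {j : ℕ} (hn : 0 < n) (hj1 : 1 ≤ j) (hj2 : j ≤ m * n) :
    ∃ (hk : m - 1 - (j - 1) / n < m) (hl : (j - 1) % n < n),
      betaRoot m n j = Bv m n (Sum.inl ⟨m - 1 - (j - 1) / n, hk⟩)
        - Bv m n (Sum.inr ⟨(j - 1) % n, hl⟩) ∧
      (j - 1) / n ≤ m - 1 ∧ n * ((j - 1) / n) + (j - 1) % n = j - 1 := by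
  have hm : 0 < m := by by_contra h; push_neg at h; interval_cases m <;> omega
  have hdiv : (j - 1) / n < m := by
    rw [Nat.div_lt_iff_lt_mul hn]; omega
  have hmod : (j - 1) % n < n := Nat.mod_lt _ hn
  have hda : Nat.div_add_mod (j-1) n = Nat.div_add_mod (j-1) n := rfl
  have hdm := Nat.div_add_mod (j-1) n
  have hk : m - 1 - (j - 1) / n < m := by
    generalize (j-1)/n = d at hdiv ⊢; omega
  have hle : (j - 1) / n ≤ m - 1 := by
    generalize (j-1)/n = d at hdiv ⊢; omega
  exact ⟨hk, hmod, by rw [betaRoot, dd_eq hk, ee_eq hmod], hle, hdm⟩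

/-- the index of the odd root `δ_{s+1} - ε_{t+1}` in the enumeration -/
def Jidx (m n s t : ℕ) : ℕ := (m - 1 - s) * n + t + 1

lemma Jidx_spec {s t : ℕ} (hn : 0 < n) (hs : s < m) (ht : t < n) :
    1 ≤ Jidx m n s t ∧ Jidx m n s t ≤ m * n ∧
      (Jidx m n s t - 1) / n = m - 1 - s ∧ (Jidx m n s t - 1) % n = t := by
  have h1 : (Jidx m n s t - 1) = n * (m - 1 - s) + t := by simp [Jidx]; ring
  have hle : Jidx m n s t ≤ m * n := by
    have : m - 1 - s ≤ m - 1 := by omega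
    have h2 : (m - 1 - s) * n ≤ (m - 1) * n := Nat.mul_le_mul_right n this
    have h3 : (m - 1) * n + n = m * n := by
      have : m - 1 + 1 = m := by omega
      calc (m - 1) * n + n = (m - 1 + 1) * n := by ring
        _ = m * n := by rw [this]
    simp only [Jidx]; omega
  refine ⟨by simp [Jidx], hle, ?_, ?_⟩
  · rw [h1, Nat.mul_add_div hn, Nat.div_eq_of_lt ht, add_zero]
  · rw [h1, Nat.mul_add_mod, Nat.mod_eq_of_lt ht]

lemma betaRoot_Jidx {s : Fin m} {t : Fin n} (hn : 0 < n) :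
    betaRoot m n (Jidx m n (s : ℕ) (t : ℕ)) = Bv m n (Sum.inl s) - Bv m n (Sum.inr t) := by
  obtain ⟨_, _, hdiv, hmod⟩ := Jidx_spec hn s.isLt t.isLt
  rw [betaRoot, hdiv, hmod]
  have : m - 1 - (m - 1 - (s : ℕ)) = (s : ℕ) := by have := s.isLt; omega
  rw [this, dd_eq s.isLt, ee_eq t.isLt]

variable {m n : ℕ}

lemma qr_facts (hn : 1 ≤ n) {i : ℕ} (hi : i ≤ m * n) :
    n * (i / n) + i % n = i ∧ i % n < n ∧ i / n ≤ m ∧ (i / n = m → i % n = 0) := by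
  have h1 := Nat.div_add_mod i n
  have h2 : i % n < n := Nat.mod_lt _ hn
  have h3 : i / n ≤ m := by
    have h4 : i / n ≤ m * n / n := Nat.div_le_div_right hi
    rwa [Nat.mul_div_cancel _ hn] at h4
  refine ⟨h1, h2, h3, ?_⟩
  intro hq
  rw [hq, Nat.mul_comm] at h1
  generalize m * n = P at h1 hi
  generalize i % n = R at h1 ⊢
  omega

lemma flip_iff (hn : 1 ≤ n) {i : ℕ} (hi : i ≤ m * n) (s : Fin m) (t : Fin n) :
    Jidx m n (s : ℕ) (t : ℕ) ≤ i ↔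
      pf m n (i / n) (i % n) (Sum.inr t) < pf m n (i / n) (i % n) (Sum.inl s) := by
  obtain ⟨hdm, hr, hq, hqm⟩ := qr_facts hn hi
  have L := lex_le (n := n) hn (k := m - 1 - (s : ℕ)) (t := (t : ℕ)) (u := i / n)
    (r := i % n) t.isLt hr
  have hi' : (i / n) * n + i % n = i := by rw [mul_comm]; exact hdm
  rw [hi'] at L
  rw [pf_inr_lt_inl hq hr hqm]
  exact L

lemma jidx_unique (hn : 1 ≤ n) {j : ℕ} (hj1 : 1 ≤ j) (hj2 : j ≤ m * n)
    {s : Fin m} {t : Fin n}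
    (hs : m - 1 - (j - 1) / n = (s : ℕ)) (ht : (j - 1) % n = (t : ℕ)) :
    j = Jidx m n (s : ℕ) (t : ℕ) := by
  obtain ⟨hk, hl, _, hkle, hdm⟩ := betaRoot_eq hn hj1 hj2
  have hsm := s.isLt
  have hd : (j - 1) / n = m - 1 - (s : ℕ) := by
    generalize (j - 1) / n = d at hs hkle ⊢; omega
  rw [hd, ht] at hdm
  have h5 : Jidx m n (s : ℕ) (t : ℕ) = (m - 1 - (s : ℕ)) * n + (t : ℕ) + 1 := rfl
  rw [h5, mul_comm]
  generalize n * (m - 1 - (s : ℕ)) = P at hdm ⊢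
  omega

lemma posSys_eq (hm : 1 ≤ m) (hn : 1 ≤ n) {i : ℕ} (hi : i ≤ m * n) :
    posSys m n i = {v | ∃ x y, pf m n (i / n) (i % n) x < pf m n (i / n) (i % n) y ∧
      v = Bv m n x - Bv m n y} := by
  obtain ⟨hdm, hr, hq, hqm⟩ := qr_facts hn hi
  ext v
  constructor
  · rintro (⟨j, hj1, hji, rfl⟩ | ⟨hpr, hnb⟩)
    · obtain ⟨hk, hl, hbeq, hkle, hdm'⟩ := betaRoot_eq hn hj1 (le_trans hji hi)
      set s : Fin m := ⟨m - 1 - (j - 1) / n, hk⟩ with hs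
      set t : Fin n := ⟨(j - 1) % n, hl⟩ with ht
      refine ⟨Sum.inr t, Sum.inl s, ?_, by rw [hbeq, neg_sub]⟩
      rw [← flip_iff hn hi s t]
      have hju : j = Jidx m n (s : ℕ) (t : ℕ) :=
        jidx_unique hn hj1 (le_trans hji hi) rfl rfl
      omega
    · rcases hpr with (⟨s, t, hst, htm, rfl⟩ | ⟨s, t, hst, htn, rfl⟩) | ⟨s, t, hsm, htn, rfl⟩
      · refine ⟨Sum.inl ⟨s, by omega⟩, Sum.inl ⟨t, htm⟩, ?_, ?_⟩
        · exact (pf_inl_lt_inl hq hr).mpr hst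
        · rw [dd_eq (show s < m by omega), dd_eq htm]
      · refine ⟨Sum.inr ⟨s, by omega⟩, Sum.inr ⟨t, htn⟩, ?_, ?_⟩
        · exact (pf_inr_lt_inr hq hr).mpr hst
        · rw [ee_eq (show s < n by omega), ee_eq htn]
      · set S : Fin m := ⟨s, hsm⟩
        set T : Fin n := ⟨t, htn⟩
        have hveq : dd m n s - ee m n t = Bv m n (Sum.inl S) - Bv m n (Sum.inr T) := by
          rw [dd_eq hsm, ee_eq htn]
        have hnotle : ¬ (Jidx m n s t ≤ i) := by
          intro h
          exact hnb ⟨Jidx m n s t, by simp [Jidx], h,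
            by rw [hveq, ← betaRoot_Jidx (s := S) (t := T) hn]⟩
        refine ⟨Sum.inl S, Sum.inr T, ?_, hveq⟩
        have h1 : ¬ pf m n (i / n) (i % n) (Sum.inr T) < pf m n (i / n) (i % n) (Sum.inl S) := by
          rw [← flip_iff hn hi S T]; exact hnotle
        have h2 : pf m n (i / n) (i % n) (Sum.inl S) ≠ pf m n (i / n) (i % n) (Sum.inr T) :=
          fun h => by cases pf_inj hq hr hqm h
        omega
  · rintro ⟨x, y, hlt, rfl⟩
    cases x with
    | inl s =>
      cases y with
      | inl t =>
        have hst : (s : ℕ) < (t : ℕ) := (pf_inl_lt_inl hq hr).mp hlt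
        refine Or.inr ⟨Or.inl (Or.inl ⟨s, t, hst, t.isLt, by rw [dd_eq s.isLt, dd_eq t.isLt]⟩), ?_⟩
        rintro ⟨j, hj1, hji, hbeq⟩
        obtain ⟨hk, hl, hbeq', _, _⟩ := betaRoot_eq hn hj1 (le_trans hji hi)
        rw [hbeq'] at hbeq
        have := (sub_eq_sub (by simp [Fin.ext_iff]; omega) (by simp) hbeq).2
        exact Sum.inl_ne_inr this
      | inr t =>
        refine Or.inr ⟨Or.inr ⟨(s : ℕ), (t : ℕ), s.isLt, t.isLt, by rw [dd_eq s.isLt, ee_eq t.isLt]⟩, ?_⟩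
        rintro ⟨j, hj1, hji, hbeq⟩
        obtain ⟨hk, hl, hbeq', hkle, hdm'⟩ := betaRoot_eq hn hj1 (le_trans hji hi)
        rw [hbeq'] at hbeq
        obtain ⟨e1, e2⟩ := sub_eq_sub (by simp) (by simp) hbeq
        have hs' : m - 1 - (j - 1) / n = (s : ℕ) := by
          have := congrArg (fun z => match z with | Sum.inl a => (a : ℕ) | Sum.inr _ => 0) e1
          simpa using this.symm
        have ht' : (j - 1) % n = (t : ℕ) := by
          have := congrArg (fun z => match z with | Sum.inl _ => 0 | Sum.inr b => (b : ℕ)) e2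
          simpa using this.symm
        have hju := jidx_unique hn hj1 (le_trans hji hi) hs' ht'
        rw [hju] at hji
        have := (flip_iff hn hi s t).mp hji
        omega
    | inr t =>
      cases y with
      | inl s =>
        have hflip := (flip_iff hn hi s t).mpr hlt
        refine Or.inl ⟨Jidx m n (s : ℕ) (t : ℕ), by simp [Jidx], hflip, ?_⟩
        rw [betaRoot_Jidx hn, neg_sub]
      | inr t' =>
        have hst : (t : ℕ) < (t' : ℕ) := (pf_inr_lt_inr hq hr).mp hlt
        refine Or.inr ⟨Or.inl (Or.inr ⟨t, t', hst, t'.isLt, by rw [ee_eq t.isLt, ee_eq t'.isLt]⟩), ?_⟩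
        rintro ⟨j, hj1, hji, hbeq⟩
        obtain ⟨hk, hl, hbeq', _, _⟩ := betaRoot_eq hn hj1 (le_trans hji hi)
        rw [hbeq'] at hbeq
        have := (sub_eq_sub (by simp [Fin.ext_iff]; omega) (by simp) hbeq).1
        exact Sum.inr_ne_inl this

variable {m n : ℕ}

lemma dd_eq' (a : Fin m) : dd m n (a : ℕ) = Bv m n (Sum.inl a) := by
  rw [dd_eq a.isLt]

lemma ee_eq' (b : Fin n) : ee m n (b : ℕ) = Bv m n (Sum.inr b) := by
  rw [ee_eq b.isLt]

lemma pf00_inl (a : Fin m) : pf m n 0 0 (Sum.inl a) = (a : ℕ) := by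
  have := a.isLt; simp only [pf]; split_ifs <;> omega

lemma pf00_inr (b : Fin n) : pf m n 0 0 (Sum.inr b) = m + (b : ℕ) := by
  have := b.isLt; simp only [pf]; split_ifs <;> omega

lemma stdSimple_eq (hm : 1 ≤ m) (hn : 1 ≤ n) :
    stdSimple m n = {v | ∃ x y, pf m n 0 0 x + 1 = pf m n 0 0 y ∧ v = Bv m n x - Bv m n y} := by
  ext v
  constructor
  · rintro ((⟨s, hs, rfl⟩ | hv) | ⟨t, ht, rfl⟩)
    · refine ⟨Sum.inl ⟨s, by omega⟩, Sum.inl ⟨s + 1, hs⟩, ?_, ?_⟩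
      · rw [pf00_inl, pf00_inl]
      · rw [dd_eq (show s < m by omega), dd_eq hs]
    · refine ⟨Sum.inl ⟨m - 1, by omega⟩, Sum.inr ⟨0, by omega⟩, ?_, ?_⟩
      · rw [pf00_inl, pf00_inr]; simp only [Fin.val_mk]; omega
      · rw [Set.mem_singleton_iff] at hv
        rw [hv, dd_eq (show m - 1 < m by omega), ee_eq (show 0 < n by omega)]
    · refine ⟨Sum.inr ⟨t, by omega⟩, Sum.inr ⟨t + 1, ht⟩, ?_, ?_⟩
      · rw [pf00_inr, pf00_inr]; simp only [Fin.val_mk]; omega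
      · rw [ee_eq (show t < n by omega), ee_eq ht]
  · rintro ⟨x, y, hxy, rfl⟩
    cases x with
    | inl a =>
      cases y with
      | inl a' =>
        rw [pf00_inl, pf00_inl] at hxy
        left; left
        refine ⟨(a : ℕ), by have := a'.isLt; omega, ?_⟩
        rw [hxy, dd_eq', dd_eq']
      | inr b' =>
        rw [pf00_inl, pf00_inr] at hxy
        have hb' : b' = ⟨0, hn⟩ := Fin.ext (by simp only [Fin.val_mk]; have := a.isLt; omega)
        have ha : a = ⟨m - 1, Nat.sub_lt hm Nat.one_pos⟩ :=
          Fin.ext (by simp only [Fin.val_mk]; have := b'.isLt; omega)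
        left; right
        rw [Set.mem_singleton_iff]
        subst hb'; subst ha
        rw [dd_eq (show m - 1 < m by omega), ee_eq (show 0 < n by omega)]
    | inr b =>
      cases y with
      | inl a' =>
        rw [pf00_inr, pf00_inl] at hxy
        exact absurd hxy (by have := a'.isLt; omega)
      | inr b' =>
        rw [pf00_inr, pf00_inr] at hxy
        right
        refine ⟨(b : ℕ), by have := b'.isLt; omega, ?_⟩
        rw [show (b : ℕ) + 1 = (b' : ℕ) by omega, ee_eq', ee_eq']

lemma qr_succ (hn : 1 ≤ n) {i : ℕ} (hi : i < m * n) :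
    ((i+1)/n = i/n ∧ (i+1)%n = i%n + 1 ∧ i%n + 1 < n) ∨
      ((i+1)/n = i/n + 1 ∧ (i+1)%n = 0 ∧ i%n + 1 = n) := by
  have h1 := Nat.div_add_mod i n
  have h2 : i % n < n := Nat.mod_lt _ hn
  rcases lt_or_eq_of_le (Nat.succ_le_of_lt h2) with h3 | h3
  · left
    have := (Nat.div_mod_unique hn (a := i+1) (d := i/n) (c := i%n + 1)).mpr
      ⟨by omega, h3⟩
    exact ⟨this.1, this.2, h3⟩
  · right
    have := (Nat.div_mod_unique hn (a := i+1) (d := i/n + 1) (c := 0)).mpr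
      ⟨by rw [Nat.mul_add, Nat.mul_one]; omega, hn⟩
    exact ⟨this.1, this.2, by omega⟩

lemma pf_succ_case (hm : 1 ≤ m) {q r q' r' : ℕ} (hq : q + 1 ≤ m) (hr : r < n)
    (h : (q' = q ∧ r' = r + 1 ∧ r + 1 < n) ∨ (q' = q + 1 ∧ r' = 0 ∧ r + 1 = n)) (z) :
    pf m n q' r' z
      = pf m n q r (Equiv.swap (Sum.inl ⟨m - 1 - q, by omega⟩) (Sum.inr ⟨r, hr⟩) z) := by
  cases z with
  | inl a =>
    by_cases ha : (a : ℕ) = m - 1 - q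
    · have hz : Sum.inl a = (Sum.inl ⟨m - 1 - q, by omega⟩ : Fin m ⊕ Fin n) := by
        rw [Sum.inl.injEq]; exact Fin.ext ha
      rw [hz, Equiv.swap_apply_left]
      have := a.isLt
      simp only [pf]; split_ifs <;> omega
    · rw [Equiv.swap_apply_of_ne_of_ne
        (by simp [Fin.ext_iff]; omega) (by simp)]
      have := a.isLt
      simp only [pf]; split_ifs <;> omega
  | inr b =>
    by_cases hb : (b : ℕ) = r
    · have hz : Sum.inr b = (Sum.inr ⟨r, hr⟩ : Fin m ⊕ Fin n) := by
        rw [Sum.inr.injEq]; exact Fin.ext hb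
      rw [hz, Equiv.swap_apply_right]
      have := b.isLt
      simp only [pf]; split_ifs <;> omega
    · rw [Equiv.swap_apply_of_ne_of_ne
        (by simp) (by simp [Fin.ext_iff]; omega)]
      have := b.isLt
      simp only [pf]; split_ifs <;> omega

variable {m n : ℕ}

lemma key_form (x y : Fin m ⊕ Fin n) (a : Fin m) (b : Fin n) :
    Bform m n (Bv m n x - Bv m n y) (Bv m n (Sum.inl a) - Bv m n (Sum.inr b))
      = (if x = Sum.inl a then 1 else 0) + (if x = Sum.inr b then 1 else 0)
        - (if y = Sum.inl a then 1 else 0) - (if y = Sum.inr b then (1:ℚ) else 0) := by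
  rw [Bform_sub_sub]
  simp only [eta, Sum.elim_inl, Sum.elim_inr]
  split_ifs <;> ring

lemma oddRefl_swap {p p' : (Fin m ⊕ Fin n) → ℕ} (hinj : Function.Injective p)
    (a : Fin m) (b : Fin n)
    (hadj : p (Sum.inl a) + 1 = p (Sum.inr b))
    (hp' : ∀ z, p' z = p (Equiv.swap (Sum.inl a) (Sum.inr b) z)) :
    oddRefl m n (Bv m n (Sum.inl a) - Bv m n (Sum.inr b))
        {v | ∃ x y, p x + 1 = p y ∧ v = Bv m n x - Bv m n y}
      = {v | ∃ x y, p' x + 1 = p' y ∧ v = Bv m n x - Bv m n y} := by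
  set x₀ : Fin m ⊕ Fin n := Sum.inl a with hx₀
  set y₀ : Fin m ⊕ Fin n := Sum.inr b with hy₀
  have hne₀ : x₀ ≠ y₀ := by simp [hx₀, hy₀]
  have hp'x₀ : p' x₀ = p y₀ := by rw [hp' x₀, Equiv.swap_apply_left]
  have hp'y₀ : p' y₀ = p x₀ := by rw [hp' y₀, Equiv.swap_apply_right]
  have hp'other : ∀ z, z ≠ x₀ → z ≠ y₀ → p' z = p z := fun z h1 h2 => by
    rw [hp' z, Equiv.swap_apply_of_ne_of_ne h1 h2]
  ext v
  constructor
  · rintro ((⟨⟨x, y, hxy, rfl⟩, hne, hB⟩ | ⟨α, ⟨x, y, hxy, rfl⟩, hB, rfl⟩) | hv)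
    · -- kept roots
      by_cases h1 : x = x₀
      · exfalso
        have e1 : p x = p x₀ := congrArg p h1
        have h4 : y = y₀ := hinj (show p y = p y₀ by omega)
        exact hne (by rw [h1, h4])
      · have h2 : x ≠ y₀ := by
          intro h
          have e1 : p x = p y₀ := congrArg p h
          have h3 : y ≠ x₀ := fun hy => by have := congrArg p hy; omega
          have h4 : y ≠ y₀ := fun hy => by have := congrArg p hy; omega
          rw [key_form, if_neg h1, if_pos h, if_neg h3, if_neg h4] at hB
          norm_num at hB
        have h4 : y ≠ y₀ := by
          intro hy
          have e1 : p y = p y₀ := congrArg p hy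
          exact h1 (hinj (show p x = p x₀ by omega))
        have h3 : y ≠ x₀ := by
          intro hy
          rw [key_form, if_neg h1, if_neg h2, if_pos hy, if_neg h4] at hB
          norm_num at hB
        refine ⟨x, y, ?_, rfl⟩
        rw [hp'other x h1 h2, hp'other y h3 h4]
        exact hxy
    · -- reflected roots
      by_cases h1 : x = x₀
      · exfalso
        have e1 : p x = p x₀ := congrArg p h1
        have h4 : y = y₀ := hinj (show p y = p y₀ by omega)
        rw [h1, h4, key_form, if_pos rfl, if_neg hne₀, if_neg (Ne.symm hne₀), if_pos rfl] at hB
        norm_num at hB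
      · by_cases h2 : x = y₀
        · have e1 : p x = p y₀ := congrArg p h2
          have h3 : y ≠ x₀ := fun hy => by have := congrArg p hy; omega
          have h4 : y ≠ y₀ := fun hy => by have := congrArg p hy; omega
          refine ⟨x₀, y, ?_, ?_⟩
          · rw [hp'x₀, hp'other y h3 h4]; omega
          · rw [h2]; abel
        · by_cases h3 : y = x₀
          · have e1 : p y = p x₀ := congrArg p h3
            have h5 : x ≠ y₀ := h2
            refine ⟨x, y₀, ?_, ?_⟩
            · rw [hp'y₀, hp'other x h1 h2]; omega
            · rw [h3]; abel
          · exfalso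
            have h4 : y ≠ y₀ := by
              intro hy
              have e1 : p y = p y₀ := congrArg p hy
              exact h1 (hinj (show p x = p x₀ by omega))
            rw [key_form, if_neg h1, if_neg h2, if_neg h3, if_neg h4] at hB
            norm_num at hB
    · -- the new root -β
      rw [Set.mem_singleton_iff] at hv
      refine ⟨y₀, x₀, ?_, ?_⟩
      · rw [hp'x₀, hp'y₀]; omega
      · rw [hv, neg_sub]
  · rintro ⟨x', y', hxy', rfl⟩
    by_cases h1 : x' = x₀
    · subst h1
      by_cases h2 : y' = y₀
      · exfalso
        rw [hp'x₀, h2, hp'y₀] at hxy'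
        omega
      · have h3 : y' ≠ x₀ := by
          intro h; rw [h, hp'x₀] at hxy'; omega
        rw [hp'x₀, hp'other y' h3 h2] at hxy'
        -- v = Bv x₀ - Bv y' = (Bv y₀ - Bv y') + β, reflected
        left; right
        refine ⟨Bv m n y₀ - Bv m n y', ⟨y₀, y', hxy', rfl⟩, ?_, by abel⟩
        rw [key_form, if_neg (Ne.symm hne₀), if_pos rfl, if_neg h3, if_neg h2]
        norm_num
    · by_cases h2 : x' = y₀
      · subst h2
        by_cases h3 : y' = x₀
        · subst h3
          right
          rw [Set.mem_singleton_iff, neg_sub]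
        · exfalso
          by_cases h4 : y' = y₀
          · rw [h4, hp'y₀] at hxy'; omega
          · rw [hp'y₀, hp'other y' h3 h4] at hxy'
            exact h4 (hinj (show p y' = p y₀ by omega))
      · by_cases h3 : y' = x₀
        · exfalso
          rw [hp'other x' h1 h2, h3, hp'x₀] at hxy'
          exact h1 (hinj (show p x' = p x₀ by omega))
        · by_cases h4 : y' = y₀
          · subst h4
            rw [hp'other x' h1 h2, hp'y₀] at hxy'
            -- v = Bv x' - Bv y₀ = (Bv x' - Bv x₀) + β, reflected
            left; right
            refine ⟨Bv m n x' - Bv m n x₀, ⟨x', x₀, hxy', rfl⟩, ?_, by abel⟩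
            rw [key_form, if_neg h1, if_neg h2, if_pos rfl, if_neg hne₀]
            norm_num
          · rw [hp'other x' h1 h2, hp'other y' h3 h4] at hxy'
            left; left
            refine ⟨⟨x', y', hxy', rfl⟩, ?_, ?_⟩
            · intro h
              have hx'y' : x' ≠ y' := fun he => by rw [he] at hxy'; omega
              exact h1 (sub_eq_sub hx'y' hne₀ h).1
            · rw [key_form, if_neg h1, if_neg h2, if_neg h3, if_neg h4]
              norm_num

variable {m n : ℕ}

lemma pf_adj {q r : ℕ} (hq1 : q + 1 ≤ m) (hr : r < n) (hkm : m - 1 - q < m) :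
    pf m n q r (Sum.inl ⟨m - 1 - q, hkm⟩) + 1 = pf m n q r (Sum.inr ⟨r, hr⟩) := by
  simp only [pf, Fin.val_mk]
  split_ifs <;> omega

lemma simpleSys_eq (hm : 1 ≤ m) (hn : 1 ≤ n) :
    ∀ i : ℕ, i ≤ m * n → simpleSys m n i =
      {v | ∃ x y, pf m n (i / n) (i % n) x + 1 = pf m n (i / n) (i % n) y ∧
        v = Bv m n x - Bv m n y} := by
  intro i
  induction i with
  | zero =>
    intro _
    show stdSimple m n = _
    rw [stdSimple_eq hm hn, Nat.zero_div, Nat.zero_mod]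
  | succ i ih =>
    intro hi1
    have hlt : i < m * n := hi1
    obtain ⟨hdm, hr, hq, hqm⟩ := qr_facts hn (le_of_lt hlt)
    have hq1 : i / n + 1 ≤ m := by
      have : i / n < m := (Nat.div_lt_iff_lt_mul hn).mpr hlt
      omega
    have hkm : m - 1 - i / n < m := by
      generalize i / n = Q at hq1; omega
    have hβ : betaRoot m n (i + 1)
        = Bv m n (Sum.inl ⟨m - 1 - i / n, hkm⟩) - Bv m n (Sum.inr ⟨i % n, hr⟩) := by
      rw [betaRoot]
      simp only [Nat.add_sub_cancel]
      rw [dd_eq hkm, ee_eq hr]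
    have hadj := pf_adj (m := m) (n := n) hq1 hr hkm
    show oddRefl m n (betaRoot m n (i + 1)) (simpleSys m n i) = _
    rw [ih (le_of_lt hlt), hβ]
    exact oddRefl_swap (pf_inj hq hr hqm) _ _ hadj
      (pf_succ_case hm hq1 hr (qr_succ hn hlt))
variable {m n : ℕ}

lemma tele {V : Type*} [AddCommGroup V] (f : ℕ → V) :
    ∀ a b : ℕ, a ≤ b → ∑ j ∈ Finset.Ico a b, (f j - f (j + 1)) = f a - f b := by
  intro a b hab
  induction b, hab using Nat.le_induction with
  | base => simp
  | succ b hab ih => rw [Finset.sum_Ico_succ_top hab, ih]; abel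

end St3

/-- For every `0 ≤ i ≤ mn`, the set `Π^{(i)}` is a simple system for the positive system
`Φ^{+,i} = {-β_1, …, -β_i} ∪ (Φ⁺ \ {β_1, …, β_i})`: it is contained in `Φ^{+,i}`, it is a
linearly independent set of cardinality `m + n - 1`, and every element of `Φ^{+,i}` is a
nonnegative integer combination of elements of `Π^{(i)}`. -/
theorem statement3 (m n : ℕ) (hm : 1 ≤ m) (hn : 1 ≤ n) :
    ∀ i : ℕ, i ≤ m * n →
      simpleSys m n i ⊆ posSys m n i ∧
      LinearIndependent ℚ (fun x : simpleSys m n i => (x : Vmn m n)) ∧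
      (simpleSys m n i).ncard = m + n - 1 ∧
      ∀ γ ∈ posSys m n i, ∃ c : Vmn m n →₀ ℕ,
        (c.support : Set (Vmn m n)) ⊆ simpleSys m n i ∧
        γ = c.sum fun α k => (k : ℚ) • α := by
  intro i hi
  obtain ⟨hdm, hr, hq, hqm⟩ := St3.qr_facts hn hi
  set P : (Fin m ⊕ Fin n) → ℕ := St3.pf m n (i / n) (i % n) with hP
  have Pinj : Function.Injective P := St3.pf_inj hq hr hqm
  have Plt : ∀ x, P x < m + n := St3.pf_lt hq hr
  have hbij : Function.Bijective (fun x => (⟨P x, Plt x⟩ : Fin (m + n))) := by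
    rw [Fintype.bijective_iff_injective_and_card]
    constructor
    · intro x y hxy
      exact Pinj (congrArg Fin.val hxy)
    · simp
  set Pe : (Fin m ⊕ Fin n) ≃ Fin (m + n) := Equiv.ofBijective _ hbij with hPe
  set w : Fin (m + n) → (Fin m ⊕ Fin n) := ⇑Pe.symm with hw
  have hPw : ∀ j : Fin (m + n), P (w j) = (j : ℕ) :=
    fun j => congrArg Fin.val (Pe.apply_symm_apply j)
  have hwP : ∀ (x : Fin m ⊕ Fin n) (h : P x < m + n), w ⟨P x, h⟩ = x := fun x h => by
    rw [show (⟨P x, h⟩ : Fin (m + n)) = Pe x from rfl]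
    exact Pe.symm_apply_apply x
  have lt1 : ∀ j : Fin (m + n - 1), (j : ℕ) < m + n := fun j => by
    have := j.isLt; omega
  have lt2 : ∀ j : Fin (m + n - 1), (j : ℕ) + 1 < m + n := fun j => by
    have := j.isLt; omega
  set u : Fin (m + n - 1) → Vmn m n :=
    fun j => St3.Bv m n (w ⟨(j : ℕ), lt1 j⟩) - St3.Bv m n (w ⟨(j : ℕ) + 1, lt2 j⟩) with hu
  have hrange : Set.range u = simpleSys m n i := by
    rw [St3.simpleSys_eq hm hn i hi, ← hP]
    ext v
    constructor
    · rintro ⟨j, rfl⟩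
      exact ⟨w ⟨(j : ℕ), lt1 j⟩, w ⟨(j : ℕ) + 1, lt2 j⟩, by rw [hPw, hPw], rfl⟩
    · rintro ⟨x, y, hxy, rfl⟩
      have hb : P x < m + n - 1 := by have := Plt y; omega
      refine ⟨⟨P x, hb⟩, ?_⟩
      have e2 : (⟨P x + 1, lt2 ⟨P x, hb⟩⟩ : Fin (m + n)) = ⟨P y, Plt y⟩ := Fin.ext hxy
      show St3.Bv m n (w ⟨P x, lt1 ⟨P x, hb⟩⟩) - St3.Bv m n (w ⟨P x + 1, lt2 ⟨P x, hb⟩⟩) = _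
      rw [e2, hwP x (lt1 ⟨P x, hb⟩), hwP y (Plt y)]
  -- linear independence of u
  set T : Vmn m n →ₗ[ℚ] (Fin (m + n - 1) → ℚ) :=
    LinearMap.pi (fun j => ∑ t : Fin (m + n),
      if (t : ℕ) ≤ (j : ℕ) then LinearMap.proj (w t) else 0) with hT
  have hBw : ∀ t k : Fin (m + n), (St3.Bv m n (w k)) (w t) = if t = k then (1 : ℚ) else 0 := by
    intro t k
    rw [St3.Bv_apply]
    by_cases h : t = k
    · rw [if_pos (congrArg w h), if_pos h]
    · rw [if_neg (fun hc => h (Pe.symm.injective hc)), if_neg h]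
  have hTu : ∀ j, T (u j) = Pi.single j (1 : ℚ) := by
    intro j
    funext j'
    simp only [hT, LinearMap.pi_apply, LinearMap.sum_apply]
    have step1 : ∀ t : Fin (m + n),
        (if (t : ℕ) ≤ (j' : ℕ) then LinearMap.proj (R := ℚ) (φ := fun _ => ℚ) (w t) else 0) (u j)
          = (if t = ⟨(j : ℕ), lt1 j⟩ then (if (t : ℕ) ≤ (j' : ℕ) then (1:ℚ) else 0) else 0)
            - (if t = ⟨(j : ℕ) + 1, lt2 j⟩ then (if (t : ℕ) ≤ (j' : ℕ) then (1:ℚ) else 0) else 0) := by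
      intro t
      rw [apply_ite (fun (L : Vmn m n →ₗ[ℚ] ℚ) => L (u j))]
      simp only [LinearMap.zero_apply, LinearMap.proj_apply, hu, Pi.sub_apply, hBw]
      split_ifs <;> ring
    rw [Finset.sum_congr rfl (fun t _ => step1 t), Finset.sum_sub_distrib,
      Finset.sum_ite_eq' Finset.univ, Finset.sum_ite_eq' Finset.univ]
    simp only [Finset.mem_univ, if_true, Fin.val_mk, Pi.single_apply]
    rcases Nat.lt_trichotomy (j' : ℕ) (j : ℕ) with h | h | h
    · rw [if_neg (by omega), if_neg (by omega), if_neg (by simp [Fin.ext_iff]; omega)]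
      norm_num
    · rw [if_pos (by omega), if_neg (by omega), if_pos (by simp [Fin.ext_iff]; omega)]
      norm_num
    · rw [if_pos (by omega), if_pos (by omega), if_neg (by simp [Fin.ext_iff]; omega)]
      norm_num
  have hlin : LinearIndependent ℚ u := by
    apply LinearIndependent.of_comp T
    have : (⇑T ∘ u) = fun j => Pi.single j (1 : ℚ) := funext fun j => hTu j
    rw [this]
    have hb := (Pi.basisFun ℚ (Fin (m + n - 1))).linearIndependent
    have hbe : ⇑(Pi.basisFun ℚ (Fin (m + n - 1))) = fun j => Pi.single j (1 : ℚ) :=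
      funext fun j => Pi.basisFun_apply ℚ _ j
    rwa [hbe] at hb
  refine ⟨?_, ?_, ?_, ?_⟩
  · -- simple system contained in positive system
    intro v hv
    rw [St3.simpleSys_eq hm hn i hi] at hv
    obtain ⟨x, y, hxy, rfl⟩ := hv
    rw [St3.posSys_eq hm hn hi]
    exact ⟨x, y, by omega, rfl⟩
  · -- linear independence
    rw [← hrange]
    exact (linearIndepOn_id_range_iff (LinearIndependent.injective hlin)).mpr hlin
  · -- cardinality
    rw [← hrange, ← Nat.card_coe_set_eq,
      Nat.card_congr (Equiv.ofInjective u (LinearIndependent.injective hlin)).symm,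
      Nat.card_eq_fintype_card, Fintype.card_fin]
  · -- every positive root is a nonneg integer combination
    intro γ hγ
    rw [St3.posSys_eq hm hn hi, ← hP] at hγ
    obtain ⟨x, y, hlt, rfl⟩ := hγ
    set W : ℕ → Vmn m n := fun j => if h : j < m + n then St3.Bv m n (w ⟨j, h⟩) else 0 with hW
    refine ⟨∑ j ∈ Finset.Ico (P x) (P y), Finsupp.single (W j - W (j + 1)) 1, ?_, ?_⟩
    · intro v hv
      simp only [Finset.coe_sort_coe, Finset.mem_coe] at hv
      have hv' := Finsupp.support_finset_sum hv
      rw [Finset.mem_biUnion] at hv'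
      obtain ⟨j, hj, hjv⟩ := hv'
      rw [Finset.mem_Ico] at hj
      have h1 : j < m + n := by have := Plt y; omega
      have h2 : j + 1 < m + n := by have := Plt y; omega
      have hv2 : v = W j - W (j + 1) := Finset.mem_singleton.mp (Finsupp.support_single_subset hjv)
      rw [St3.simpleSys_eq hm hn i hi, ← hP]
      refine ⟨w ⟨j, h1⟩, w ⟨j + 1, h2⟩, by rw [hPw, hPw], ?_⟩
      rw [hv2, hW]
      simp only [dif_pos h1, dif_pos h2]
    · have e1 : ∀ j ∈ Finset.Ico (P x) (P y),
          (Finsupp.single (W j - W (j + 1)) (1 : ℕ)).sum (fun α k => (k : ℚ) • α)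
            = W j - W (j + 1) := by
        intro j _
        rw [Finsupp.sum_single_index (by simp)]
        simp
      have hWx : W (P x) = St3.Bv m n x := by
        rw [hW]; simp only [dif_pos (Plt x)]; rw [hwP x (Plt x)]
      have hWy : W (P y) = St3.Bv m n y := by
        rw [hW]; simp only [dif_pos (Plt y)]; rw [hwP y (Plt y)]
      calc St3.Bv m n x - St3.Bv m n y
          = W (P x) - W (P y) := by rw [hWx, hWy]
        _ = ∑ j ∈ Finset.Ico (P x) (P y), (W j - W (j + 1)) :=
            (St3.tele W _ _ (le_of_lt hlt)).symm
        _ = ∑ j ∈ Finset.Ico (P x) (P y),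
              (Finsupp.single (W j - W (j + 1)) (1 : ℕ)).sum (fun α k => (k : ℚ) • α) :=
            (Finset.sum_congr rfl e1).symm
        _ = (∑ j ∈ Finset.Ico (P x) (P y), Finsupp.single (W j - W (j + 1)) (1 : ℕ)).sum
              (fun α k => (k : ℚ) • α) :=
            Finsupp.sum_finset_sum_index (by intro a; simp)
              (by intro a b1 b2; push_cast; rw [add_smul])
end
end

section
/- Suppose λ ∈ X is dominant and typical, i.e. (λ + ρ, β) ≠ 0 for every positive odd root β. Then for every 1 ≤ i ≤ mn the weight λ_i = λ − (β_1 + β_2 + ⋯ + β_i) is again dominant. -/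
open scoped BigOperators

noncomputable section

/-- Half the sum of the positive even roots. -/
def rhoEven (m n : ℕ) : Vmn m n :=
  (1 / 2 : ℚ) •
    ((∑ p : Fin m × Fin m, if (p.1 : ℕ) < (p.2 : ℕ) then dd m n p.1 - dd m n p.2 else 0)
      + ∑ q : Fin n × Fin n, if (q.1 : ℕ) < (q.2 : ℕ) then ee m n q.1 - ee m n q.2 else 0)

/-- Half the sum of the positive odd roots. -/
def rhoOdd (m n : ℕ) : Vmn m n :=
  (1 / 2 : ℚ) • ∑ q : Fin m × Fin n, (dd m n q.1 - ee m n q.2)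

/-- `ρ = ρ_0 - ρ_1`. -/
def rho (m n : ℕ) : Vmn m n := rhoEven m n - rhoOdd m n

/-- `λ_0 = λ` and `λ_i = λ_{i-1} - β_i`. -/
def lamSeq (m n : ℕ) (lambda : Vmn m n) : ℕ → Vmn m n
  | 0 => lambda
  | i + 1 => lamSeq m n lambda i - betaRoot m n (i + 1)

/-- The embedding of the weight lattice `X = ℤ^{m+n}` into `X ⊗ ℚ`. -/
def castWt (m n : ℕ) (lambda : (Fin m ⊕ Fin n) → ℤ) : Vmn m n := fun x => (lambda x : ℚ)


/-- The set of positive odd roots `δ_s - ε_t` (`1 ≤ s ≤ m`, `1 ≤ t ≤ n`). -/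
def posOdd (m n : ℕ) : Set (Vmn m n) :=
  {v | ∃ s t, s < m ∧ t < n ∧ v = dd m n s - ee m n t}

/-- A weight `Σ a_s δ_s + Σ b_t ε_t` is dominant if `a_1 ≥ … ≥ a_m` and `b_1 ≥ … ≥ b_n`. -/
def IsDominant (m n : ℕ) (v : Vmn m n) : Prop :=
  (∀ s s' : Fin m, (s : ℕ) ≤ (s' : ℕ) → v (Sum.inl s') ≤ v (Sum.inl s)) ∧
    (∀ t t' : Fin n, (t : ℕ) ≤ (t' : ℕ) → v (Sum.inr t') ≤ v (Sum.inr t))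


lemma lamSeq_eq (m n : ℕ) (L : Vmn m n) (i : ℕ) :
    lamSeq m n L i = L - ∑ j ∈ Finset.range i, betaRoot m n (j + 1) := by
  induction i with
  | zero => simp [lamSeq]
  | succ i ih => rw [lamSeq, ih, Finset.sum_range_succ]; abel

lemma lamSeq_inl (m n : ℕ) (L : Vmn m n) (i : ℕ) (s : Fin m) :
    lamSeq m n L i (Sum.inl s)
      = L (Sum.inl s)
        - ((Finset.range i).filter (fun j => (s : ℕ) = m - 1 - j / n)).card := by
  rw [lamSeq_eq, Pi.sub_apply]
  congr 1
  rw [Finset.sum_apply]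
  simp only [betaRoot, Pi.sub_apply, dd, ee, Nat.add_sub_cancel, sub_zero]
  rw [Finset.sum_boole]

lemma lamSeq_inr (m n : ℕ) (L : Vmn m n) (i : ℕ) (t : Fin n) :
    lamSeq m n L i (Sum.inr t)
      = L (Sum.inr t)
        + ((Finset.range i).filter (fun j => (t : ℕ) = j % n)).card := by
  rw [lamSeq_eq, Pi.sub_apply]
  rw [Finset.sum_apply]
  simp only [betaRoot, Pi.sub_apply, dd, ee, Nat.add_sub_cancel, zero_sub,
    Finset.sum_neg_distrib, Finset.sum_boole, sub_neg_eq_add]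

lemma card_delta_mono (m n i : ℕ) (hn : 1 ≤ n) (hi : i ≤ m * n) (s s' : ℕ)
    (hss : s ≤ s') (hs' : s' < m) :
    ((Finset.range i).filter (fun j => s = m - 1 - j / n)).card
      ≤ ((Finset.range i).filter (fun j => s' = m - 1 - j / n)).card := by
  have hmul : n * (m - 1 - s) = n * (m - 1 - s') + n * (s' - s) := by
    rw [← Nat.mul_add]; congr 1; omega
  have key : ∀ j ∈ (Finset.range i).filter (fun j => s = m - 1 - j / n),
      j = n * (m - 1 - s') + n * (s' - s) + j % n ∧ j % n < n := by
    intro j hj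
    simp only [Finset.mem_filter, Finset.mem_range] at hj
    have hjmn : j < n * m := by
      rw [Nat.mul_comm]; exact lt_of_lt_of_le hj.1 hi
    have hdiv : j / n < m := Nat.div_lt_of_lt_mul hjmn
    have h1 : j / n = m - 1 - s := by omega
    have hj_eq := Nat.div_add_mod j n
    rw [h1] at hj_eq
    have hrem : j % n < n := Nat.mod_lt _ hn
    omega
  apply Finset.card_le_card_of_injOn (fun j => j - n * (s' - s))
  · intro j hj
    obtain ⟨hjeq, hrem⟩ := key j hj
    simp only [Finset.mem_coe, Finset.mem_filter, Finset.mem_range] at hj ⊢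
    refine ⟨by omega, ?_⟩
    have hfj : j - n * (s' - s) = n * (m - 1 - s') + j % n := by omega
    rw [hfj, Nat.mul_add_div (by omega), Nat.div_eq_of_lt hrem]
    omega
  · intro j1 hj1 j2 hj2 heq
    have k1 := (key j1 hj1).1
    have k2 := (key j2 hj2).1
    simp only at heq
    omega

lemma card_eps_mono (n i : ℕ) (hn : 1 ≤ n) (t t' : ℕ) (htt : t ≤ t') (ht' : t' < n) :
    ((Finset.range i).filter (fun j => t' = j % n)).card
      ≤ ((Finset.range i).filter (fun j => t = j % n)).card := by
  have key : ∀ j ∈ (Finset.range i).filter (fun j => t' = j % n),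
      j = n * (j / n) + t' := by
    intro j hj
    simp only [Finset.mem_filter, Finset.mem_range] at hj
    have := Nat.div_add_mod j n
    omega
  apply Finset.card_le_card_of_injOn (fun j => j - (t' - t))
  · intro j hj
    have hjeq := key j hj
    simp only [Finset.mem_coe, Finset.mem_filter, Finset.mem_range] at hj ⊢
    refine ⟨by omega, ?_⟩
    have hfj : j - (t' - t) = n * (j / n) + t := by omega
    rw [hfj, Nat.mul_add_mod, Nat.mod_eq_of_lt (by omega)]
  · intro j1 hj1 j2 hj2 heq
    have k1 := key j1 hj1
    have k2 := key j2 hj2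
    simp only at heq
    omega

/-- If `λ ∈ X` is dominant and typical (i.e. `(λ+ρ, β) ≠ 0` for every positive odd root
`β`), then every `λ_i = λ - (β_1 + ⋯ + β_i)` (`1 ≤ i ≤ mn`) is again dominant. -/
theorem statement5 (m n : ℕ) (hm : 1 ≤ m) (hn : 1 ≤ n) (lambda : (Fin m ⊕ Fin n) → ℤ)
    (hdom : IsDominant m n (castWt m n lambda))
    (htyp : ∀ β ∈ posOdd m n, Bform m n (castWt m n lambda + rho m n) β ≠ 0) :
    ∀ i : ℕ, 1 ≤ i → i ≤ m * n → IsDominant m n (lamSeq m n (castWt m n lambda) i) := by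
  intro i _ hi
  constructor
  · intro s s' hss
    rw [lamSeq_inl, lamSeq_inl]
    have h1 := hdom.1 s s' hss
    have h2 := card_delta_mono m n i hn hi (s : ℕ) (s' : ℕ) hss s'.isLt
    have h3 := (Nat.cast_le (α := ℚ)).mpr h2
    linarith
  · intro t t' htt
    rw [lamSeq_inr, lamSeq_inr]
    have h1 := hdom.2 t t' htt
    have h2 := card_eps_mono n i hn (t : ℕ) (t' : ℕ) htt t'.isLt
    have h3 := (Nat.cast_le (α := ℚ)).mpr h2
    linarith
end
end
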